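/- Let n ≥ 2 and let (C_{αβγ}), with indices in {0, 1, …, n}, be a family of real numbers symmetric in its first two indices (C_{αβγ} = C_{βαγ}) which satisfies the trace identity η^{αβ}C_{αβγ} = 2·η^{αβ}C_{αγβ} for every γ. Then there exists a family (A_{αβγ}) of real numbers, symmetric in its first two indices, such that for all α, β, γ: −(n+1)A_{αβγ} + A_{αγβ} + A_{βγα} + (η^{μν}A_{αμν})η_{βγ} + (η^{μν}A_{βμν})η_{αγ} − (η^{μν}A_{μνα})η_{βγ} − (η^{μν}A_{μνβ})η_{γα} − (η^{μν}A_{μνγ})η_{αβ} = −C_{αβγ}. -/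

import Mathlib

/-- The Minkowski metric η = diag(−1, 1, …, 1) on ℝ^{n+1}; since η is its own inverse,
`η^{μν} = η_{μν}`. -/
noncomputable def etaM (n : ℕ) : Matrix (Fin (n + 1)) (Fin (n + 1)) ℝ :=
  Matrix.diagonal fun μ => if μ = 0 then -1 else 1

/-!
The equation is inverted explicitly. For a metric `g` with `g⁻¹ = g = gᵀ` in dimension `N`, put
`v_γ = g^{μν} C_{μγν}`; symmetry of `C` gives `g^{μν} C_{γμν} = v_γ` and the trace identity gives
`g^{μν} C_{μνγ} = 2 v_γ`. The candidate
`A_{αβγ} = ((N - 1) C_{αβγ} + C_{αγβ} + C_{βγα} - v_γ g_{αβ}) / ((N - 2) (N + 1))`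
then has both traces proportional to `v`, and substituting them turns the equation into a linear
identity in `C` and `v` whose coefficients all cancel except that of `C_{αβγ}`.
-/

open Finset Matrix

namespace MetricContraction

variable {ι : Type*} [Fintype ι] {g : Matrix ι ι ℝ}

def contract (g : Matrix ι ι ℝ) (X : ι → ι → ℝ) : ℝ := ∑ μ, ∑ ν, g μ ν * X μ ν

lemma contract_add (X Y : ι → ι → ℝ) :
    contract g (fun μ ν => X μ ν + Y μ ν) = contract g X + contract g Y := by
  simp only [contract, mul_add, sum_add_distrib]

lemma contract_sub (X Y : ι → ι → ℝ) :
    contract g (fun μ ν => X μ ν - Y μ ν) = contract g X - contract g Y := by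
  simp only [contract, mul_sub, sum_sub_distrib]

lemma contract_const_mul (c : ℝ) (X : ι → ι → ℝ) :
    contract g (fun μ ν => c * X μ ν) = c * contract g X := by
  simp only [contract, mul_sum, mul_left_comm]

lemma contract_swap (hg : gᵀ = g) (X : ι → ι → ℝ) :
    contract g (fun μ ν => X ν μ) = contract g X := by
  rw [contract, contract, sum_comm]
  refine sum_congr rfl fun μ _ => sum_congr rfl fun ν _ => ?_
  rw [← transpose_apply g μ ν, hg]

lemma contract_mul_apply [DecidableEq ι] (hgg : g * g = 1) (w : ι → ℝ) (α : ι) :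
    contract g (fun μ ν => w ν * g α μ) = w α := by
  calc contract g (fun μ ν => w ν * g α μ) = ∑ ν, (g * g) α ν * w ν := by
        simp only [contract, mul_apply, sum_mul]
        rw [sum_comm]
        exact sum_congr rfl fun _ _ => sum_congr rfl fun _ _ => by ring
    _ = w α := by simp [hgg, one_apply]

lemma contract_self [DecidableEq ι] (hg : gᵀ = g) (hgg : g * g = 1) :
    contract g g = Fintype.card ι := by
  calc contract g g = trace (g * gᵀ) := by simp [contract, trace, mul_apply]
    _ = Fintype.card ι := by rw [hg, hgg, trace_one]

variable (g) in
noncomputable def solution (C : ι → ι → ι → ℝ) (α β γ : ι) : ℝ :=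
  (((Fintype.card ι : ℝ) - 2) * (Fintype.card ι + 1))⁻¹ *
    ((Fintype.card ι - 1) * C α β γ + C α γ β + C β γ α -
      contract g (fun μ ν => C μ γ ν) * g α β)

variable {C : ι → ι → ι → ℝ}

lemma solution_symm (hg : gᵀ = g) (hC : ∀ α β γ, C α β γ = C β α γ) (α β γ : ι) :
    solution g C α β γ = solution g C β α γ := by
  rw [solution, solution, hC α β γ, ← transpose_apply g α β, hg]
  ring

lemma contract_eq_of_symm (hC : ∀ α β γ, C α β γ = C β α γ) (γ : ι) :
    contract g (C γ) = contract g (fun μ ν => C μ γ ν) :=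
  congrArg (contract g) (funext₂ fun μ ν => hC γ μ ν)

lemma contract_solution [DecidableEq ι] (hg : gᵀ = g) (hgg : g * g = 1)
    (hC : ∀ α β γ, C α β γ = C β α γ)
    (hCtr : ∀ γ, contract g (fun μ ν => C μ ν γ) = 2 * contract g (fun μ ν => C μ γ ν)) (α : ι) :
    contract g (solution g C α) =
      (((Fintype.card ι : ℝ) - 2) * (Fintype.card ι + 1))⁻¹ *
        ((Fintype.card ι + 1) * contract g (fun μ ν => C μ α ν)) := by
  unfold solution
  simp only [contract_const_mul, contract_add, contract_sub]
  rw [contract_swap hg (fun μ ν => C α μ ν), contract_mul_apply hgg, hCtr,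
    contract_eq_of_symm hC]
  ring

lemma contract_solution_fst_snd [DecidableEq ι] (hg : gᵀ = g) (hgg : g * g = 1)
    (hCtr : ∀ γ, contract g (fun μ ν => C μ ν γ) = 2 * contract g (fun μ ν => C μ γ ν)) (γ : ι) :
    contract g (fun μ ν => solution g C μ ν γ) =
      (((Fintype.card ι : ℝ) - 2) * (Fintype.card ι + 1))⁻¹ *
        (Fintype.card ι * contract g (fun μ ν => C μ γ ν)) := by
  unfold solution
  simp only [contract_const_mul, contract_add, contract_sub]
  rw [contract_swap hg (fun μ ν => C μ γ ν), hCtr, contract_const_mul _ g, contract_self hg hgg]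
  ring

theorem solution_spec [DecidableEq ι] (hg : gᵀ = g) (hgg : g * g = 1)
    (hN : Fintype.card ι ≠ 2) (hC : ∀ α β γ, C α β γ = C β α γ)
    (hCtr : ∀ γ, contract g (fun μ ν => C μ ν γ) = 2 * contract g (fun μ ν => C μ γ ν))
    (α β γ : ι) :
    -(Fintype.card ι : ℝ) * solution g C α β γ + solution g C α γ β + solution g C β γ α +
        contract g (solution g C α) * g β γ + contract g (solution g C β) * g α γ -
        contract g (fun μ ν => solution g C μ ν α) * g β γ -
        contract g (fun μ ν => solution g C μ ν β) * g γ α -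
        contract g (fun μ ν => solution g C μ ν γ) * g α β = -C α β γ := by
  have hD : ((Fintype.card ι : ℝ) - 2) * (Fintype.card ι + 1) ≠ 0 :=
    mul_ne_zero (sub_ne_zero.2 (mod_cast hN)) (by positivity)
  simp only [contract_solution hg hgg hC hCtr, contract_solution_fst_snd hg hgg hCtr]
  unfold solution
  rw [hC γ β α, hC β α γ, hC γ α β, ← transpose_apply g γ α, hg]
  linear_combination (-C α β γ) * inv_mul_cancel₀ hD

end MetricContraction

open MetricContraction

lemma etaM_transpose (n : ℕ) : (etaM n)ᵀ = etaM n :=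
  diagonal_transpose _

lemma etaM_mul_self (n : ℕ) : etaM n * etaM n = 1 := by
  rw [etaM, diagonal_mul_diagonal, ← diagonal_one]
  congr 1
  funext μ
  split_ifs <;> norm_num

/-- for `n ≥ 2` and a family `C_{αβγ}` symmetric in its first two indices and
satisfying the contracted Bianchi-type trace identity `η^{αβ}C_{αβγ} = 2 η^{αβ}C_{αγβ}`,
there exists a family `A_{αβγ}`, symmetric in its first two indices, solving
`−(n+1)A_{αβγ} + A_{αγβ} + A_{βγα} + (η^{μν}A_{αμν})η_{βγ} + (η^{μν}A_{βμν})η_{αγ}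
 − (η^{μν}A_{μνα})η_{βγ} − (η^{μν}A_{μνβ})η_{γα} − (η^{μν}A_{μνγ})η_{αβ} = −C_{αβγ}`. -/
theorem exists_A_of_C (n : ℕ) (hn : 2 ≤ n)
    (Cc : Fin (n + 1) → Fin (n + 1) → Fin (n + 1) → ℝ)
    (hCsymm : ∀ α β γ, Cc α β γ = Cc β α γ)
    (hCtrace : ∀ γ, (∑ α, ∑ β, etaM n α β * Cc α β γ) = 2 * ∑ α, ∑ β, etaM n α β * Cc α γ β) :
    ∃ A : Fin (n + 1) → Fin (n + 1) → Fin (n + 1) → ℝ,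
      (∀ α β γ, A α β γ = A β α γ) ∧
      ∀ α β γ,
        -((n : ℝ) + 1) * A α β γ + A α γ β + A β γ α +
          (∑ μ, ∑ ν, etaM n μ ν * A α μ ν) * etaM n β γ +
          (∑ μ, ∑ ν, etaM n μ ν * A β μ ν) * etaM n α γ -
          (∑ μ, ∑ ν, etaM n μ ν * A μ ν α) * etaM n β γ -
          (∑ μ, ∑ ν, etaM n μ ν * A μ ν β) * etaM n γ α -
          (∑ μ, ∑ ν, etaM n μ ν * A μ ν γ) * etaM n α β = -Cc α β γ := by
  have hN : Fintype.card (Fin (n + 1)) ≠ 2 := by simp only [Fintype.card_fin]; omega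
  refine ⟨solution (etaM n) Cc, solution_symm (etaM_transpose n) hCsymm, fun α β γ => ?_⟩
  have h := solution_spec (etaM_transpose n) (etaM_mul_self n) hN hCsymm hCtrace α β γ
  rwa [Fintype.card_fin, Nat.cast_succ] at h
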